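/- Let F be a set of d-dimensional density matrices and O a set of quantum channels that is convex, contains the identity channel, contains the state-preparation channel of every state in F, is closed under composition, maps F into F (i.e., N(η) ∈ F for all η ∈ F, N ∈ O), and whose limit points in diamond norm belong to O. Then F is convex and compact in the trace-norm topology. -/

import Mathlib

/-!
Mixing the preparation channels of `x, y ∈ F` with weights `a, b` gives a free channel sending
`x` to `a • x + b • y`, so `F` is convex.

Entries of a density matrix are bounded by `1` (`2 × 2` principal minors are nonnegative), so a
sequence in `F` has an entrywise convergent subsequence, with limit `η`. Since
`‖prep M‖_◇ ≤ d³ ‖M‖_F`, the channels `prep (f (φ k))` converge to `prep η` in diamond norm, so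
`prep η` is free and `η = prep η ρ ∈ F` for any `ρ ∈ F`. Finally `‖A‖₁ ≤ √d ‖A‖_F` turns
entrywise convergence into trace-norm convergence.
-/

open Matrix ComplexOrder BigOperators Filter

noncomputable section

/-- A density matrix: positive semidefinite with unit trace. -/
def IsDensity {d : ℕ} (ρ : Matrix (Fin d) (Fin d) ℂ) : Prop :=
  ρ.PosSemidef ∧ ρ.trace = 1

/-- Loewner order: `A ≤ B` iff `B - A` is positive semidefinite. -/
def loewner {d : ℕ} (A B : Matrix (Fin d) (Fin d) ℂ) : Prop :=
  (B - A).PosSemidef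

/-- Trace norm `‖A‖₁ = tr √(AᴴA)`. -/
noncomputable def traceNorm {n : Type*} [Fintype n] [DecidableEq n]
    (A : Matrix n n ℂ) : ℝ :=
  (((Matrix.posSemidef_conjTranspose_mul_self A).1.eigenvectorUnitary : Matrix n n ℂ) *
    Matrix.diagonal (fun i =>
      ((Real.sqrt ((Matrix.posSemidef_conjTranspose_mul_self A).1.eigenvalues i) : ℝ) : ℂ)) *
    (star (Matrix.posSemidef_conjTranspose_mul_self A).1.eigenvectorUnitary :
      Matrix n n ℂ)).trace.re

/-- Choi matrix of a linear map on matrices. -/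
def choi {d : ℕ} (Λ : Matrix (Fin d) (Fin d) ℂ →ₗ[ℂ] Matrix (Fin d) (Fin d) ℂ) :
    Matrix (Fin d × Fin d) (Fin d × Fin d) ℂ :=
  Matrix.of fun p q => Λ (Matrix.single p.2 q.2 1) p.1 q.1

/-- A quantum channel: completely positive (PSD Choi matrix) and trace preserving. -/
def IsCPTP {d : ℕ} (Λ : Matrix (Fin d) (Fin d) ℂ →ₗ[ℂ] Matrix (Fin d) (Fin d) ℂ) : Prop :=
  (choi Λ).PosSemidef ∧ ∀ X, (Λ X).trace = X.trace

/-- The extension `Λ ⊗ id` of a map to a bipartite system with an ancilla of equal dimension. -/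
def tensExt {d : ℕ} (Λ : Matrix (Fin d) (Fin d) ℂ →ₗ[ℂ] Matrix (Fin d) (Fin d) ℂ)
    (M : Matrix (Fin d × Fin d) (Fin d × Fin d) ℂ) :
    Matrix (Fin d × Fin d) (Fin d × Fin d) ℂ :=
  Matrix.of fun p q => Λ (Matrix.of fun i j => M (i, p.2) (j, q.2)) p.1 q.1

/-- Diamond norm: `‖Λ‖_◇ = sup_ρ ‖(Λ ⊗ id)(ρ)‖₁` over bipartite states. -/
noncomputable def diamondNorm {d : ℕ}
    (Λ : Matrix (Fin d) (Fin d) ℂ →ₗ[ℂ] Matrix (Fin d) (Fin d) ℂ) : ℝ :=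
  sSup {x | ∃ ρ : Matrix (Fin d × Fin d) (Fin d × Fin d) ℂ,
    ρ.PosSemidef ∧ ρ.trace = 1 ∧ x = traceNorm (tensExt Λ ρ)}

/-- Compactness (sequential form) of a set of maps in the diamond-norm topology. -/
def DiamondSeqCompact {d : ℕ}
    (O : Set (Matrix (Fin d) (Fin d) ℂ →ₗ[ℂ] Matrix (Fin d) (Fin d) ℂ)) : Prop :=
  ∀ f : ℕ → (Matrix (Fin d) (Fin d) ℂ →ₗ[ℂ] Matrix (Fin d) (Fin d) ℂ),
    (∀ n, f n ∈ O) → ∃ Λ ∈ O, ∃ φ : ℕ → ℕ, StrictMono φ ∧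
      Filter.Tendsto (fun n => diamondNorm (f (φ n) - Λ)) Filter.atTop (nhds 0)

/-- State-preparation channel `X ↦ tr(X) • η`. -/
def prepChannel {d : ℕ} (η : Matrix (Fin d) (Fin d) ℂ) :
    Matrix (Fin d) (Fin d) ℂ →ₗ[ℂ] Matrix (Fin d) (Fin d) ℂ where
  toFun X := X.trace • η
  map_add' X Y := by simp [trace_add, add_smul]
  map_smul' c X := by simp [smul_smul]

/-- Matrix logarithm of a Hermitian matrix (via spectral decomposition); junk value otherwise. -/
noncomputable def mlog {d : ℕ} (A : Matrix (Fin d) (Fin d) ℂ) : Matrix (Fin d) (Fin d) ℂ :=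
  if hA : A.IsHermitian then
    (hA.eigenvectorUnitary : Matrix (Fin d) (Fin d) ℂ) *
      Matrix.diagonal (fun i => (Real.log (hA.eigenvalues i) : ℂ)) *
      (hA.eigenvectorUnitary : Matrix (Fin d) (Fin d) ℂ)ᴴ
  else 0

/-- Matrix exponential. -/
noncomputable def mexp {d : ℕ} (A : Matrix (Fin d) (Fin d) ℂ) : Matrix (Fin d) (Fin d) ℂ :=
  NormedSpace.exp A

/-- Quantum (Umegaki) relative entropy in bits: `D(ρ‖σ) = tr[ρ (log₂ ρ - log₂ σ)]`. -/
noncomputable def relEnt {d : ℕ} (ρ σ : Matrix (Fin d) (Fin d) ℂ) : ℝ :=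
  ((ρ * ((Real.log 2)⁻¹ • (mlog ρ - mlog σ))).trace).re

open scoped MatrixOrder Topology

lemma Matrix.PosSemidef.norm_apply_sq_le {n : Type*} {A : Matrix n n ℂ} (hA : A.PosSemidef)
    (a b : n) : ‖A a b‖ ^ 2 ≤ (A a a).re * (A b b).re := by
  have hdet := (hA.submatrix ![a, b]).det_nonneg
  rw [det_fin_two] at hdet
  simp only [submatrix_apply, Matrix.cons_val_zero, Matrix.cons_val_one] at hdet
  rw [← hA.1.apply b a, Complex.star_def, Complex.mul_conj'] at hdet
  have hre := (Complex.nonneg_iff.1 hdet).1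
  have ha := (Complex.nonneg_iff.1 (hA.diag_nonneg (i := a))).2
  simp only [Complex.sub_re, Complex.mul_re, ← ha, zero_mul, sub_zero] at hre
  norm_cast at hre
  linarith

section Trace

variable {n : Type*} [Fintype n]

lemma Matrix.PosSemidef.norm_apply_le_re_trace {A : Matrix n n ℂ} (hA : A.PosSemidef)
    (a b : n) : ‖A a b‖ ≤ A.trace.re := by
  have hdiag : ∀ c, 0 ≤ (A c c).re ∧ (A c c).re ≤ A.trace.re := fun c =>
    ⟨(Complex.nonneg_iff.1 hA.diag_nonneg).1, by
      rw [trace, Complex.re_sum]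
      exact Finset.single_le_sum (f := fun i => (A i i).re)
        (fun i _ => (Complex.nonneg_iff.1 hA.diag_nonneg).1) (Finset.mem_univ c)⟩
  refine le_of_sq_le_sq ((hA.norm_apply_sq_le a b).trans ?_) ((hdiag a).1.trans (hdiag a).2)
  rw [sq]
  exact mul_le_mul (hdiag a).2 (hdiag b).2 (hdiag b).1 ((hdiag a).1.trans (hdiag a).2)

lemma re_trace_conjTranspose_mul_self (A : Matrix n n ℂ) :
    (Aᴴ * A).trace.re = ∑ i, ∑ j, ‖A i j‖ ^ 2 := by
  simp only [trace, diag_apply, mul_apply, conjTranspose_apply, Complex.re_sum]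
  rw [Finset.sum_comm]
  simp only [RCLike.star_def, ← Complex.normSq_eq_conj_mul_self, Complex.normSq_eq_norm_sq,
    Complex.ofReal_re]

variable [DecidableEq n]

lemma traceNorm_eq_re_trace_sqrt (A : Matrix n n ℂ) :
    traceNorm A = (CFC.sqrt (Aᴴ * A)).trace.re := by
  have hA := posSemidef_conjTranspose_mul_self A
  rw [CFC.sqrt_eq_cfc, cfc_nnreal_eq_real _ _ hA.nonneg, hA.1.cfc_eq]
  simp [traceNorm, IsHermitian.cfc, Function.comp_def, max_eq_left (hA.eigenvalues_nonneg _)]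

lemma traceNorm_nonneg (A : Matrix n n ℂ) : 0 ≤ traceNorm A := by
  rw [traceNorm_eq_re_trace_sqrt]
  exact (Complex.nonneg_iff.1 (CFC.sqrt_nonneg _).posSemidef.trace_nonneg).1

/-- Cauchy–Schwarz for the diagonal of `S = √(AᴴA)`, followed by `tr (SᴴS) = tr (AᴴA)`. -/
lemma traceNorm_sq_le (A : Matrix n n ℂ) :
    traceNorm A ^ 2 ≤ Fintype.card n * ∑ i, ∑ j, ‖A i j‖ ^ 2 := by
  set S := CFC.sqrt (Aᴴ * A)
  have hS : S.IsHermitian := (CFC.sqrt_nonneg _).posSemidef.1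
  have hSS : Sᴴ * S = Aᴴ * A := by
    rw [hS.eq]; exact CFC.sqrt_mul_sqrt_self _ (posSemidef_conjTranspose_mul_self A).nonneg
  calc traceNorm A ^ 2 = (∑ i, (S i i).re) ^ 2 := by
        rw [traceNorm_eq_re_trace_sqrt, trace, Complex.re_sum]; rfl
    _ ≤ Fintype.card n * ∑ i, (S i i).re ^ 2 := sq_sum_le_card_mul_sum_sq
    _ ≤ Fintype.card n * ∑ i, ∑ j, ‖S j i‖ ^ 2 := by
        gcongr with i
        exact (sq_le_sq.2 (by simpa using Complex.abs_re_le_norm (S i i))).trans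
          (Finset.single_le_sum (f := fun j => ‖S j i‖ ^ 2) (fun _ _ => by positivity)
            (Finset.mem_univ i))
    _ = Fintype.card n * ∑ i, ∑ j, ‖A i j‖ ^ 2 := by
        rw [Finset.sum_comm, ← re_trace_conjTranspose_mul_self, hSS,
          re_trace_conjTranspose_mul_self]

end Trace

lemma tendsto_sqrt_mul_sum_norm_sq_nhds_zero {m n : Type*} [Fintype m] [Fintype n] (c : ℝ) :
    Tendsto (fun A : Matrix m n ℂ => √(c * ∑ i, ∑ j, ‖A i j‖ ^ 2)) (𝓝 0) (𝓝 0) := by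
  have hcont : Continuous fun A : Matrix m n ℂ => √(c * ∑ i, ∑ j, ‖A i j‖ ^ 2) := by fun_prop
  simpa using hcont.tendsto 0

lemma tendsto_traceNorm_nhds_zero {n : Type*} [Fintype n] [DecidableEq n] :
    Tendsto (traceNorm : Matrix n n ℂ → ℝ) (𝓝 0) (𝓝 0) :=
  squeeze_zero traceNorm_nonneg (fun A => Real.le_sqrt_of_sq_le (traceNorm_sq_le A))
    (tendsto_sqrt_mul_sum_norm_sq_nhds_zero _)

section PrepChannel

variable {d : ℕ}

lemma prepChannel_sub (a b : Matrix (Fin d) (Fin d) ℂ) :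
    prepChannel a - prepChannel b = prepChannel (a - b) := by
  ext X : 1
  simp [prepChannel, smul_sub]

lemma prepChannel_apply_of_trace_eq_one (η : Matrix (Fin d) (Fin d) ℂ)
    {X : Matrix (Fin d) (Fin d) ℂ} (hX : X.trace = 1) : prepChannel η X = η := by
  simp [prepChannel, hX]

lemma tensExt_prepChannel_apply (M : Matrix (Fin d) (Fin d) ℂ)
    (ρ : Matrix (Fin d × Fin d) (Fin d × Fin d) ℂ) (p q : Fin d × Fin d) :
    tensExt (prepChannel M) ρ p q = (∑ i, ρ (i, p.2) (i, q.2)) * M p.1 q.1 := by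
  simp [tensExt, prepChannel, trace, diag]

lemma traceNorm_tensExt_prepChannel_sq_le (M : Matrix (Fin d) (Fin d) ℂ)
    {ρ : Matrix (Fin d × Fin d) (Fin d × Fin d) ℂ} (hρ : ρ.PosSemidef) (htr : ρ.trace = 1) :
    traceNorm (tensExt (prepChannel M) ρ) ^ 2 ≤ d ^ 6 * ∑ i, ∑ j, ‖M i j‖ ^ 2 := by
  have hentry (p q : Fin d × Fin d) :
      ‖tensExt (prepChannel M) ρ p q‖ ^ 2 ≤ d ^ 2 * ‖M p.1 q.1‖ ^ 2 := by
    have hpartial : ‖∑ i, ρ (i, p.2) (i, q.2)‖ ≤ d := by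
      refine (norm_sum_le _ _).trans ?_
      simpa [htr] using Finset.sum_le_sum fun i (_ : i ∈ Finset.univ) =>
        hρ.norm_apply_le_re_trace (i, p.2) (i, q.2)
    rw [tensExt_prepChannel_apply, norm_mul, mul_pow]
    gcongr
  calc traceNorm (tensExt (prepChannel M) ρ) ^ 2
      ≤ Fintype.card (Fin d × Fin d) *
          ∑ p, ∑ q, ‖tensExt (prepChannel M) ρ p q‖ ^ 2 := traceNorm_sq_le _
    _ ≤ d ^ 2 * ∑ p : Fin d × Fin d, ∑ q : Fin d × Fin d, d ^ 2 * ‖M p.1 q.1‖ ^ 2 := by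
        rw [Fintype.card_prod, Fintype.card_fin, Nat.cast_mul, ← sq]
        exact mul_le_mul_of_nonneg_left
          (Finset.sum_le_sum fun p _ => Finset.sum_le_sum fun q _ => hentry p q) (sq_nonneg _)
    _ = d ^ 6 * ∑ i, ∑ j, ‖M i j‖ ^ 2 := by
        simp only [Fintype.sum_prod_type, Finset.sum_const, Finset.card_univ, Fintype.card_fin,
          nsmul_eq_mul, ← Finset.mul_sum]
        ring

lemma diamondNorm_nonneg (Λ : Matrix (Fin d) (Fin d) ℂ →ₗ[ℂ] Matrix (Fin d) (Fin d) ℂ) :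
    0 ≤ diamondNorm Λ :=
  Real.sSup_nonneg fun _ ⟨_, _, _, hx⟩ => hx ▸ traceNorm_nonneg _

lemma diamondNorm_prepChannel_le (M : Matrix (Fin d) (Fin d) ℂ) :
    diamondNorm (prepChannel M) ≤ √(d ^ 6 * ∑ i, ∑ j, ‖M i j‖ ^ 2) :=
  Real.sSup_le (fun _ ⟨_, hρ, htr, hx⟩ =>
    hx ▸ Real.le_sqrt_of_sq_le (traceNorm_tensExt_prepChannel_sq_le M hρ htr)) (Real.sqrt_nonneg _)

lemma tendsto_diamondNorm_prepChannel_nhds_zero :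
    Tendsto (fun M : Matrix (Fin d) (Fin d) ℂ => diamondNorm (prepChannel M)) (𝓝 0) (𝓝 0) :=
  squeeze_zero (fun _ => diamondNorm_nonneg _) diamondNorm_prepChannel_le
    (tendsto_sqrt_mul_sum_norm_sq_nhds_zero _)

end PrepChannel

lemma IsDensity.norm_apply_le_one {d : ℕ} {ρ : Matrix (Fin d) (Fin d) ℂ} (hρ : IsDensity ρ)
    (i j : Fin d) : ‖ρ i j‖ ≤ 1 := by
  simpa [hρ.2] using hρ.1.norm_apply_le_re_trace i j

lemma IsDensity.exists_tendsto_subseq {d : ℕ} {f : ℕ → Matrix (Fin d) (Fin d) ℂ}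
    (hf : ∀ k, IsDensity (f k)) :
    ∃ η, ∃ φ : ℕ → ℕ, StrictMono φ ∧ Tendsto (f ∘ φ) atTop (𝓝 η) := by
  have hK : IsCompact (Set.univ.pi fun _ : Fin d => Set.univ.pi fun _ : Fin d =>
      Metric.closedBall (0 : ℂ) 1) :=
    isCompact_univ_pi fun _ => isCompact_univ_pi fun _ => isCompact_closedBall 0 1
  obtain ⟨η, -, φ, hφ, hlim⟩ := hK.tendsto_subseq (x := fun k i j => f k i j) fun k =>
    Set.mem_univ_pi.2 fun i => Set.mem_univ_pi.2 fun j =>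
      mem_closedBall_zero_iff.2 ((hf k).norm_apply_le_one i j)
  exact ⟨Matrix.of η, φ, hφ, hlim⟩

theorem statement6_general {d : ℕ} (F : Set (Matrix (Fin d) (Fin d) ℂ))
    (O : Set (Matrix (Fin d) (Fin d) ℂ →ₗ[ℂ] Matrix (Fin d) (Fin d) ℂ))
    (hFd : ∀ η ∈ F, IsDensity η)
    (hOconv : Convex ℝ O)
    (hprep : ∀ η ∈ F, prepChannel η ∈ O)
    (hfree : ∀ N ∈ O, ∀ η ∈ F, N η ∈ F)
    (hlim : ∀ Λ : Matrix (Fin d) (Fin d) ℂ →ₗ[ℂ] Matrix (Fin d) (Fin d) ℂ,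
      (∀ ε > (0 : ℝ), ∃ N ∈ O, diamondNorm (N - Λ) < ε) → Λ ∈ O) :
    Convex ℝ F ∧
      ∀ f : ℕ → Matrix (Fin d) (Fin d) ℂ, (∀ n, f n ∈ F) →
        ∃ η ∈ F, ∃ φ : ℕ → ℕ, StrictMono φ ∧
          Filter.Tendsto (fun n => traceNorm (f (φ n) - η)) Filter.atTop (nhds 0) := by
  refine ⟨fun x hx y hy a b ha hb hab => ?_, fun f hf => ?_⟩
  · simpa [prepChannel_apply_of_trace_eq_one _ (hFd x hx).2] using
      hfree _ (hOconv (hprep x hx) (hprep y hy) ha hb hab) x hx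
  obtain ⟨η, φ, hφ, hfη⟩ := IsDensity.exists_tendsto_subseq fun k => hFd _ (hf k)
  have hsub : Tendsto (fun k => f (φ k) - η) atTop (𝓝 0) := by
    simpa using hfη.sub_const η
  have hprepη : prepChannel η ∈ O := hlim _ fun ε hε => by
    obtain ⟨k, hk⟩ := ((tendsto_diamondNorm_prepChannel_nhds_zero.comp hsub).eventually
      (gt_mem_nhds hε)).exists
    exact ⟨_, hprep _ (hf (φ k)), by rwa [prepChannel_sub]⟩
  have hηF : η ∈ F := by
    simpa [prepChannel_apply_of_trace_eq_one _ (hFd _ (hf 0)).2] using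
      hfree _ hprepη _ (hf 0)
  exact ⟨η, hηF, φ, hφ, tendsto_traceNorm_nhds_zero.comp hsub⟩

/-- If `O` is a set of channels that is convex, contains the identity, contains
all state-preparation channels of states in `F`, is closed under composition, maps `F` into `F`,
and contains all of its diamond-norm limit points, then `F` is convex and compact (sequential
formulation) in the trace-norm topology. -/
theorem statement6 {d : ℕ} (F : Set (Matrix (Fin d) (Fin d) ℂ))
    (O : Set (Matrix (Fin d) (Fin d) ℂ →ₗ[ℂ] Matrix (Fin d) (Fin d) ℂ))
    (hFd : ∀ η ∈ F, IsDensity η)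
    (hOcptp : ∀ N ∈ O, IsCPTP N)
    (hOconv : Convex ℝ O)
    (hid : (LinearMap.id : Matrix (Fin d) (Fin d) ℂ →ₗ[ℂ] Matrix (Fin d) (Fin d) ℂ) ∈ O)
    (hprep : ∀ η ∈ F, prepChannel η ∈ O)
    (hcomp : ∀ N ∈ O, ∀ M ∈ O, N ∘ₗ M ∈ O)
    (hfree : ∀ N ∈ O, ∀ η ∈ F, N η ∈ F)
    (hlim : ∀ Λ : Matrix (Fin d) (Fin d) ℂ →ₗ[ℂ] Matrix (Fin d) (Fin d) ℂ,
      (∀ ε > (0 : ℝ), ∃ N ∈ O, diamondNorm (N - Λ) < ε) → Λ ∈ O) :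
    Convex ℝ F ∧
      ∀ f : ℕ → Matrix (Fin d) (Fin d) ℂ, (∀ n, f n ∈ F) →
        ∃ η ∈ F, ∃ φ : ℕ → ℕ, StrictMono φ ∧
          Filter.Tendsto (fun n => traceNorm (f (φ n) - η)) Filter.atTop (nhds 0) :=
  statement6_general F O hFd hOconv hprep hfree hlim
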